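/- arXiv:funct-an/9704001 — 7 statements merged into one kernel-verified Lean document; each statement's English description precedes it below -/
import Mathlib

section
/- Let C be a left-cancellative monoid (a*b = a*c implies b = c, with identity element 1) and R a commutative ring. For a ∈ C let λ_a denote the left shift on finitely supported functions, (λ_a f)(b) = f(a*b) (this is again finitely supported since x ↦ a*x is injective). Suppose S : (C →₀ R) → (C →₀ R) is an R-linear map that is shift-invariant, i.e., S(λ_a f) = λ_a(S f) for all a ∈ C and all finitely supported f : C → R. Then there exists a unique function k : C → R such that for every finitely supported f and every a ∈ C, (S f)(a) = ∑_{b ∈ supp f} κ_a(b)·f(b), where κ_a(b) = k(c) if there exists (a necessarily unique) c ∈ C with a*c = b, and κ_a(b) = 0 otherwise. Moreover k(c) = (S δ_c)(1), where δ_c is the finitely supported function equal to 1 at c and 0 elsewhere. -/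
open scoped Classical

theorem aux_single {C : Type*} [LeftCancelMonoid C] {R : Type*} [CommRing R]
    (S : (C →₀ R) →ₗ[R] (C →₀ R))
    (hS : ∀ (a : C) (f : C →₀ R),
      S (Finsupp.comapDomain (fun b => a * b) f ((mul_right_injective a).injOn)) =
        Finsupp.comapDomain (fun b => a * b) (S f) ((mul_right_injective a).injOn))
    (a b : C) :
    S (Finsupp.single b 1) a =
      (if h : ∃ c : C, a * c = b then (S (Finsupp.single h.choose 1)) 1 else 0) := by
  have key := congrArg (fun g : C →₀ R => g 1) (hS a (Finsupp.single b 1))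
  simp only [Finsupp.comapDomain_apply, mul_one] at key
  rw [← key]
  by_cases h : ∃ c : C, a * c = b
  · have hc : a * h.choose = b := h.choose_spec
    have heq : Finsupp.comapDomain (fun b' => a * b') (Finsupp.single b 1)
        ((mul_right_injective a).injOn) = Finsupp.single h.choose (1 : R) := by
      ext x
      simp only [Finsupp.comapDomain_apply, Finsupp.single_apply]
      by_cases hx : x = h.choose
      · subst hx; simp [hc]
      · have hne : b ≠ a * x := by
          intro hb
          exact hx (mul_left_cancel (hc.trans hb)).symm
        simp [hne, Ne.symm hx]
    rw [heq, dif_pos h]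
  · have heq : Finsupp.comapDomain (fun b' => a * b') (Finsupp.single b (1 : R))
        ((mul_right_injective a).injOn) = 0 := by
      ext x
      have hne : b ≠ a * x := fun hb => h ⟨x, hb.symm⟩
      simp [Finsupp.comapDomain_apply, Finsupp.single_apply, hne]
    rw [dif_neg h]
    simp only [heq, map_zero]
    rfl

theorem aux_main {C : Type*} [LeftCancelMonoid C] {R : Type*} [CommRing R]
    (S : (C →₀ R) →ₗ[R] (C →₀ R))
    (hS : ∀ (a : C) (f : C →₀ R),
      S (Finsupp.comapDomain (fun b => a * b) f ((mul_right_injective a).injOn)) =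
        Finsupp.comapDomain (fun b => a * b) (S f) ((mul_right_injective a).injOn))
    (f : C →₀ R) (a : C) :
    S f a = ∑ b ∈ f.support,
      (if h : ∃ c : C, a * c = b then (S (Finsupp.single h.choose 1)) 1 else 0) * f b := by
  have hf : f = ∑ b ∈ f.support, (f b) • Finsupp.single b (1 : R) := by
    conv_lhs => rw [← Finsupp.sum_single f]
    rw [Finsupp.sum]
    congr 1
    ext b
    rw [Finsupp.smul_single, smul_eq_mul, mul_one]
  conv_lhs => rw [hf, map_sum]
  rw [Finsupp.finset_sum_apply]
  refine Finset.sum_congr rfl fun b _ => ?_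
  rw [map_smul, Finsupp.smul_apply, smul_eq_mul, aux_single S hS a b, mul_comm]

/-- Every shift-invariant `R`-linear operator on finitely supported functions on a
left-cancellative monoid `C` is a "convolution": there is a unique kernel `k : C → R`
such that `(S f)(a) = ∑_{b ∈ supp f} κ_a(b) · f(b)` where `κ_a(b) = k(c)` for the unique
`c` with `a * c = b` (and `κ_a(b) = 0` if no such `c` exists); moreover this kernel is
given by `k(c) = (S δ_c)(1)`. -/
theorem shift_invariant_operator_is_convolution
    {C : Type*} [LeftCancelMonoid C] {R : Type*} [CommRing R]
    (S : (C →₀ R) →ₗ[R] (C →₀ R))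
    (hS : ∀ (a : C) (f : C →₀ R),
      S (Finsupp.comapDomain (fun b => a * b) f ((mul_right_injective a).injOn)) =
        Finsupp.comapDomain (fun b => a * b) (S f) ((mul_right_injective a).injOn)) :
    (∃! k : C → R, ∀ (f : C →₀ R) (a : C),
        S f a = ∑ b ∈ f.support,
          (if h : ∃ c : C, a * c = b then k h.choose else 0) * f b) ∧
    (∀ (f : C →₀ R) (a : C),
        S f a = ∑ b ∈ f.support,
          (if h : ∃ c : C, a * c = b then (S (Finsupp.single h.choose 1)) 1 else 0) * f b) := by
  refine ⟨⟨fun c => S (Finsupp.single c 1) 1, aux_main S hS, ?_⟩, aux_main S hS⟩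
  intro k hk
  funext c
  have this1 := hk (Finsupp.single c (1 : R)) 1
  rw [Finset.sum_subset Finsupp.support_single_subset (fun x _ hxs => by
      rw [Finsupp.notMem_support_iff.mp hxs, mul_zero])] at this1
  rw [Finset.sum_singleton] at this1
  have hex : ∃ c' : C, 1 * c' = c := ⟨c, one_mul c⟩
  rw [dif_pos hex] at this1
  have hch : hex.choose = c := by
    have := hex.choose_spec; rwa [one_mul] at this
  rw [hch, Finsupp.single_eq_same, mul_one] at this1
  exact this1.symm
end

section
/- Let C₁ be a left-cancellative semigroup in which every element has finitely many left divisors (D(c) = {a | ∃ x, a*x = c} finite; a\c the unique x with a*x = c), let C₂ be a monoid, and let t : C₁ → C₂ → ℝ be a token from C₁ to C₂. Define the t-transform T from the monoid algebra MonoidAlgebra ℝ C₂ (finitely supported functions C₂ → ℝ with convolution product (k*k')(b) = ∑_{(a,c): a·c = b} k(a)·k'(c)) to functions on C₁ by (T k)(c₁) = ∑_{c₂ ∈ supp k} t(c₁, c₂)·k(c₂). Then T is an algebra homomorphism in the convolution sense: for all k₁, k₂ ∈ MonoidAlgebra ℝ C₂ and all c₁' ∈ C₁, T(k₂ * k₁)(c₁')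 = ∑_{c₁ ∈ D(c₁')} (T k₂)(c₁) · (T k₁)(c₁\c₁'). (T is also ℝ-linear.) -/
/-!
For fixed `c₁`, `k ↦ (T k)(c₁)` is the linear functional on `ℝ[C₂]` taking the value `t(c₁, c₂)`
on the basis vector `c₂`, so `T` is linear. Expanding both sides of the product formula, the
coefficient of `k₂(a) k₁(b)` is `t(c₁', a b)` on the left and `∑_{c₁ ∈ D(c₁')} t(c₁, a) t(c₁\c₁', b)`
on the right, and these agree by the token identity.
-/

open scoped Classical

/-- `ldiv a c` is the (unique, in a left-cancellative semigroup) solution `x` of `a * x = c`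
when it exists, denoted `a\c` (an arbitrary default value otherwise). -/
noncomputable def ldiv {C : Type*} [Semigroup C] (a c : C) : C :=
  if h : ∃ x : C, a * x = c then h.choose else a

namespace MonoidAlgebra

variable {R M : Type*} [CommSemiring R]

noncomputable def linearCombination (f : M → R) : MonoidAlgebra R M →ₗ[R] R :=
  Finsupp.linearCombination R f ∘ₗ (coeffLinearEquiv R).toLinearMap

theorem linearCombination_apply (f : M → R) (x : MonoidAlgebra R M) :
    linearCombination f x = ∑ m ∈ x.coeff.support, f m * x.coeff m := by
  simp only [linearCombination, LinearMap.coe_comp, Function.comp_apply, LinearEquiv.coe_coe,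
    coeffLinearEquiv_apply, Finsupp.linearCombination_apply, Finsupp.sum, smul_eq_mul, mul_comm]

theorem linearCombination_single (f : M → R) (m : M) (r : R) :
    linearCombination f (single m r) = f m * r := by
  simp [linearCombination, mul_comm]

theorem linearCombination_mul [Mul M] (f : M → R) (x y : MonoidAlgebra R M) :
    linearCombination f (x * y) =
      ∑ a ∈ x.coeff.support, ∑ b ∈ y.coeff.support, f (a * b) * (x.coeff a * y.coeff b) := by
  simp only [mul_def, Finsupp.sum, map_sum, linearCombination_single]

theorem linearCombination_mul_eq_sum {ι : Type*} [Mul M] {s : Finset ι} {f : M → R}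
    {g h : ι → M → R} (hfgh : ∀ a b, ∑ i ∈ s, g i a * h i b = f (a * b))
    (x y : MonoidAlgebra R M) :
    linearCombination f (x * y) =
      ∑ i ∈ s, linearCombination (g i) x * linearCombination (h i) y := by
  simp_rw [linearCombination_mul, linearCombination_apply, ← hfgh, Finset.sum_mul_sum,
    Finset.sum_mul]
  rw [eq_comm, Finset.sum_comm]
  refine Finset.sum_congr rfl fun a _ => ?_
  rw [Finset.sum_comm]
  exact Finset.sum_congr rfl fun b _ => Finset.sum_congr rfl fun i _ => by ring

end MonoidAlgebra

theorem t_transform_is_algebra_hom_general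
    {C₁ : Type*} [Semigroup C₁]
    (hfin : ∀ c : C₁, {a : C₁ | ∃ x : C₁, a * x = c}.Finite)
    {C₂ : Type*} [Monoid C₂]
    (t : C₁ → C₂ → ℝ)
    (htoken : ∀ (c₁' : C₁) (c₂ c₂' : C₂),
      ∑ c₁ ∈ (hfin c₁').toFinset, t c₁ c₂ * t (ldiv c₁ c₁') c₂' = t c₁' (c₂ * c₂'))
    (T : MonoidAlgebra ℝ C₂ → C₁ → ℝ)
    (hT : ∀ (k : MonoidAlgebra ℝ C₂) (c₁ : C₁),
      T k c₁ = ∑ c₂ ∈ k.coeff.support, t c₁ c₂ * k.coeff c₂) :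
    (∀ (k₁ k₂ : MonoidAlgebra ℝ C₂) (c₁' : C₁),
        T (k₂ * k₁) c₁' =
          ∑ c₁ ∈ (hfin c₁').toFinset, T k₂ c₁ * T k₁ (ldiv c₁ c₁')) ∧
    (∀ (k₁ k₂ : MonoidAlgebra ℝ C₂), T (k₁ + k₂) = T k₁ + T k₂) ∧
    (∀ (r : ℝ) (k : MonoidAlgebra ℝ C₂), T (r • k) = r • T k) := by
  obtain rfl : T = fun k c => MonoidAlgebra.linearCombination (t c) k := by
    ext k c
    rw [hT, MonoidAlgebra.linearCombination_apply]
  refine ⟨fun k₁ k₂ c₁' => MonoidAlgebra.linearCombination_mul_eq_sum (htoken c₁') k₂ k₁, ?_, ?_⟩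
  · intro k₁ k₂
    ext c
    exact map_add _ k₁ k₂
  · intro r k
    ext c
    exact map_smul _ r k

/-- The t-transform `(T k)(c₁) = ∑_{c₂ ∈ supp k} t(c₁,c₂)·k(c₂)` associated with a token `t`
from `C₁` to `C₂` is an algebra homomorphism from the convolution algebra
`MonoidAlgebra ℝ C₂` to the convolution algebra over `C₁`:
`T(k₂ * k₁)(c₁') = ∑_{c₁ ∈ D(c₁')} (T k₂)(c₁) · (T k₁)(c₁\c₁')`; moreover `T` is ℝ-linear. -/
theorem t_transform_is_algebra_hom
    {C₁ : Type*} [Semigroup C₁]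
    (hcan₁ : ∀ c a b : C₁, c * a = c * b → a = b)
    (hfin : ∀ c : C₁, {a : C₁ | ∃ x : C₁, a * x = c}.Finite)
    {C₂ : Type*} [Monoid C₂]
    (t : C₁ → C₂ → ℝ)
    (htoken : ∀ (c₁' : C₁) (c₂ c₂' : C₂),
      ∑ c₁ ∈ (hfin c₁').toFinset, t c₁ c₂ * t (ldiv c₁ c₁') c₂' = t c₁' (c₂ * c₂'))
    (T : MonoidAlgebra ℝ C₂ → C₁ → ℝ)
    (hT : ∀ (k : MonoidAlgebra ℝ C₂) (c₁ : C₁),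
      T k c₁ = ∑ c₂ ∈ k.coeff.support, t c₁ c₂ * k.coeff c₂) :
    (∀ (k₁ k₂ : MonoidAlgebra ℝ C₂) (c₁' : C₁),
        T (k₂ * k₁) c₁' =
          ∑ c₁ ∈ (hfin c₁').toFinset, T k₂ c₁ * T k₁ (ldiv c₁ c₁')) ∧
    (∀ (k₁ k₂ : MonoidAlgebra ℝ C₂), T (k₁ + k₂) = T k₁ + T k₂) ∧
    (∀ (r : ℝ) (k : MonoidAlgebra ℝ C₂), T (r • k) = r • T k) :=
  t_transform_is_algebra_hom_general hfin t htoken T hT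
end

section
/- Let p : ℕ → ℝ[X] be a sequence of polynomials with deg(p n) = n for every n, which is of binomial type: for all n ∈ ℕ and all x, y ∈ ℝ, (p n).eval(x + y) = ∑_{k=0}^{n} (p k).eval(x) · (p (n−k)).eval(y). Then any ℝ-linear operator Q : ℝ[X] → ℝ[X] satisfying Q(p 0) = 0 and Q(p (n+1)) = p n for all n (such Q exists and is unique, since the p n form a basis of ℝ[X]) is shift-invariant: for every a ∈ ℝ and every f ∈ ℝ[X], Q(f.comp(X + C a)) = (Q f).comp(X + C a). -/
open Polynomial

private lemma span_range_eq_top_of_degree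
    (p : ℕ → ℝ[X]) (hdeg : ∀ n : ℕ, (p n).degree = n) :
    Submodule.span ℝ (Set.range p) = ⊤ := by
  rw [eq_top_iff]
  intro f _
  suffices H : ∀ (n : ℕ) (f : ℝ[X]), f.natDegree = n →
      f ∈ Submodule.span ℝ (Set.range p) from H _ f rfl
  intro n
  induction n using Nat.strong_induction_on with
  | _ n ih =>
    intro f hn
    by_cases hf : f = 0
    · simp [hf]
    have hpn0 : p n ≠ 0 := fun h => by simpa [h] using hdeg n
    set c : ℝ := f.leadingCoeff / (p n).leadingCoeff with hc
    have hc0 : c ≠ 0 :=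
      div_ne_zero (leadingCoeff_ne_zero.mpr hf) (leadingCoeff_ne_zero.mpr hpn0)
    have hlc : f.leadingCoeff = (c • p n).leadingCoeff := by
      rw [smul_eq_C_mul, leadingCoeff_mul, leadingCoeff_C, hc,
        div_mul_cancel₀ _ (leadingCoeff_ne_zero.mpr hpn0)]
    have hdc : f.degree = (c • p n).degree := by
      rw [smul_eq_C_mul, degree_mul, degree_C hc0, zero_add, hdeg, ← hn,
        degree_eq_natDegree hf]
    have hmem : p n ∈ Submodule.span ℝ (Set.range p) := Submodule.subset_span ⟨n, rfl⟩
    by_cases hg : f - c • p n = 0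
    · rw [sub_eq_zero] at hg; rw [hg]; exact Submodule.smul_mem _ _ hmem
    have hlt : (f - c • p n).degree < f.degree := degree_sub_lt hdc hf hlc
    have hnat : (f - c • p n).natDegree < n := by
      have := natDegree_lt_natDegree hg hlt; rwa [hn] at this
    have h1 := ih _ hnat (f - c • p n) rfl
    have h2 := Submodule.add_mem _ h1 (Submodule.smul_mem _ c hmem)
    simpa using h2

/-- The delta operator `Q` attached to a polynomial sequence of binomial type
(`Q (p 0) = 0`, `Q (p (n+1)) = p n`) is shift invariant. -/
theorem delta_operator_of_binomial_sequence_shift_invariant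
    (p : ℕ → ℝ[X])
    (hdeg : ∀ n : ℕ, (p n).degree = n)
    (hbin : ∀ (n : ℕ) (x y : ℝ),
      (p n).eval (x + y) =
        ∑ k ∈ Finset.range (n + 1), (p k).eval x * (p (n - k)).eval y)
    (Q : ℝ[X] →ₗ[ℝ] ℝ[X])
    (hQ0 : Q (p 0) = 0)
    (hQs : ∀ n : ℕ, Q (p (n + 1)) = p n) :
    ∀ (a : ℝ) (f : ℝ[X]),
      Q (f.comp (X + C a)) = (Q f).comp (X + C a) := by
  intro a f
  -- key expansion of the shift of p n
  have hcomp : ∀ n : ℕ, (p n).comp (X + C a) =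
      ∑ k ∈ Finset.range (n + 1), (p (n - k)).eval a • p k := by
    intro n
    apply Polynomial.funext
    intro x
    rw [eval_comp]
    simp only [eval_add, eval_X, eval_C, eval_finset_sum, eval_smul, smul_eq_mul]
    rw [hbin n x a]
    exact Finset.sum_congr rfl fun k _ => by ring
  -- the two linear maps agree on all p n
  have key : ∀ n : ℕ, Q ((p n).comp (X + C a)) = (Q (p n)).comp (X + C a) := by
    intro n
    rw [hcomp n, map_sum]
    simp only [map_smul]
    cases n with
    | zero => simp [hQ0]
    | succ m =>
      rw [Finset.sum_range_succ']
      simp only [hQ0, smul_zero, add_zero, hQs]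
      rw [hcomp m]
      exact Finset.sum_congr rfl fun k _ => by rw [Nat.succ_sub_succ]
  -- extend by linearity
  have hspan := span_range_eq_top_of_degree p hdeg
  let L₁ : ℝ[X] →ₗ[ℝ] ℝ[X] :=
    Q.comp (Polynomial.aeval (X + C a : ℝ[X])).toLinearMap
  let L₂ : ℝ[X] →ₗ[ℝ] ℝ[X] :=
    (Polynomial.aeval (X + C a : ℝ[X])).toLinearMap.comp Q
  have : L₁ = L₂ := by
    apply LinearMap.ext_on_range (v := p)
    · rw [hspan]
    · intro n
      simpa [L₁, L₂, ← comp_eq_aeval] using key n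
  have := LinearMap.congr_fun this f
  simpa [L₁, L₂, ← comp_eq_aeval] using this
end

section
/- Let Q : ℝ[X] → ℝ[X] be a shift-invariant ℝ-linear operator and let p : ℕ → ℝ[X] be a sequence of polynomials with deg(p n) = n for all n, p 0 = 1, (p n).eval(0) = 0 for all n ≥ 1, Q(p 0) = 0, and Q(p (n+1)) = p n for all n. Then p is of binomial type: for all n ∈ ℕ and all x, y ∈ ℝ, (p n).eval(x + y) = ∑_{k=0}^{n} (p k).eval(x) · (p (n−k)).eval(y). -/
open Polynomial

/-- The basic sequence of a shift-invariant linear operator `Q`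
(`deg (p n) = n`, `p 0 = 1`, `(p n).eval 0 = 0` for `n ≥ 1`, `Q (p 0) = 0`,
`Q (p (n+1)) = p n`) is of binomial type. -/
theorem basic_sequence_is_of_binomial_type
    (Q : ℝ[X] →ₗ[ℝ] ℝ[X])
    (hshift : ∀ (a : ℝ) (f : ℝ[X]),
      Q (f.comp (X + C a)) = (Q f).comp (X + C a))
    (p : ℕ → ℝ[X])
    (hdeg : ∀ n : ℕ, (p n).degree = n)
    (hp0 : p 0 = 1)
    (hpeval : ∀ n : ℕ, 1 ≤ n → (p n).eval 0 = 0)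
    (hQ0 : Q (p 0) = 0)
    (hQs : ∀ n : ℕ, Q (p (n + 1)) = p n) :
    ∀ (n : ℕ) (x y : ℝ),
      (p n).eval (x + y) =
        ∑ k ∈ Finset.range (n + 1), (p k).eval x * (p (n - k)).eval y := by
  -- iterated action of Q on the basic sequence
  have hQiter : ∀ (j k : ℕ), (Q ^ j) (p k) = if k < j then 0 else p (k - j) := by
    intro j
    induction j with
    | zero => intro k; simp
    | succ j ih =>
      intro k
      rw [pow_succ, Module.End.mul_apply]
      cases k with
      | zero =>
        rw [hQ0, map_zero, if_pos (Nat.succ_pos j)]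
      | succ m =>
        rw [hQs, ih]
        rw [Nat.succ_sub_succ]
        by_cases h : m < j
        · rw [if_pos h, if_pos (Nat.succ_lt_succ h)]
        · rw [if_neg h, if_neg (fun hh => h (Nat.lt_of_succ_lt_succ hh))]
  -- shift invariance of iterates
  have hshift' : ∀ (j : ℕ) (a : ℝ) (f : ℝ[X]),
      (Q ^ j) (f.comp (X + C a)) = ((Q ^ j) f).comp (X + C a) := by
    intro j
    induction j with
    | zero => intro a f; simp
    | succ j ih =>
      intro a f
      rw [pow_succ, Module.End.mul_apply, Module.End.mul_apply, hshift, ih]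
  -- the p's span polynomials of degree ≤ n
  have hspan : ∀ (n : ℕ) (f : ℝ[X]), f.degree ≤ (n : ℕ) →
      ∃ c : ℕ → ℝ, f = ∑ k ∈ Finset.range (n + 1), C (c k) * p k := by
    intro n
    induction n with
    | zero =>
      intro f hf
      refine ⟨fun _ => f.coeff 0, ?_⟩
      rw [Finset.sum_range_one, hp0, mul_one]
      exact eq_C_of_degree_le_zero (by exact_mod_cast hf)
    | succ n ih =>
      intro f hf
      have hL0 : (p (n + 1)).coeff (n + 1) ≠ 0 := by
        have hnd : (p (n + 1)).natDegree = n + 1 :=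
          natDegree_eq_of_degree_eq_some (hdeg (n + 1))
        have hne : p (n + 1) ≠ 0 := by
          intro h
          have hh := hdeg (n + 1)
          rw [h, degree_zero] at hh
          exact absurd hh WithBot.bot_ne_coe
        have hlc : (p (n + 1)).leadingCoeff ≠ 0 := leadingCoeff_ne_zero.mpr hne
        rwa [leadingCoeff, hnd] at hlc
      set a : ℝ := f.coeff (n + 1) / (p (n + 1)).coeff (n + 1) with ha
      have hg : (f - C a * p (n + 1)).degree ≤ (n : ℕ) := by
        rw [degree_le_iff_coeff_zero]
        intro m hm
        have hm' : n < m := by exact_mod_cast hm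
        rw [coeff_sub, coeff_C_mul]
        rcases eq_or_lt_of_le (Nat.succ_le_of_lt hm') with h | h
        · rw [← h, ha, div_mul_cancel₀ _ hL0, sub_self]
        · have h1 : f.coeff m = 0 := by
            apply coeff_eq_zero_of_degree_lt
            exact lt_of_le_of_lt hf (by exact_mod_cast h)
          have h2 : (p (n + 1)).coeff m = 0 := by
            apply coeff_eq_zero_of_degree_lt
            rw [hdeg (n + 1)]
            exact_mod_cast h
          rw [h1, h2, mul_zero, sub_zero]
      obtain ⟨c', hc'⟩ := ih _ hg
      refine ⟨fun k => if k = n + 1 then a else c' k, ?_⟩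
      rw [Finset.sum_range_succ]
      have h2 : ∀ k ∈ Finset.range (n + 1),
          C ((fun k => if k = n + 1 then a else c' k) k) * p k
          = C (c' k) * p k := by
        intro k hk
        simp only
        rw [if_neg (by have := Finset.mem_range.mp hk; omega)]
      have h3 : ((fun k => if k = n + 1 then a else c' k) (n + 1)) = a := by
        simp
      rw [Finset.sum_congr rfl h2, ← hc', h3]
      ring
  -- main argument
  intro n x y
  set f : ℝ[X] := (p n).comp (X + C y) with hfdef
  have hdegf : f.degree ≤ (n : ℕ) := by
    have h1 : f.natDegree ≤ n := by
      calc f.natDegree ≤ (p n).natDegree * (X + C y).natDegree :=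
            natDegree_comp_le
        _ = n := by
            rw [natDegree_X_add_C, mul_one,
              natDegree_eq_of_degree_eq_some (hdeg n)]
    exact le_trans degree_le_natDegree (by exact_mod_cast h1)
  obtain ⟨c, hc⟩ := hspan n f hdegf
  -- identify the coefficients
  have hcj : ∀ j ∈ Finset.range (n + 1), c j = (p (n - j)).eval y := by
    intro j hj
    have hjn : j ≤ n := Nat.lt_succ_iff.mp (Finset.mem_range.mp hj)
    have h1 : ((Q ^ j) f).eval 0 = (p (n - j)).eval y := by
      rw [hfdef, hshift', hQiter, if_neg (not_lt.mpr hjn), eval_comp,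
        eval_add, eval_X, eval_C, zero_add]
    have h2 : ((Q ^ j) f).eval 0 = c j := by
      rw [hc, map_sum, eval_finset_sum]
      have hterm : ∀ k ∈ Finset.range (n + 1),
          ((Q ^ j) (C (c k) * p k)).eval 0 = if k = j then c j else 0 := by
        intro k hk
        rw [← smul_eq_C_mul, map_smul, eval_smul, smul_eq_mul, hQiter]
        by_cases h : k < j
        · rw [if_pos h, if_neg (by omega), eval_zero, mul_zero]
        · rw [if_neg h]
          by_cases h' : k = j
          · subst h'
            rw [if_pos rfl, Nat.sub_self, hp0, eval_one, mul_one]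
          · rw [if_neg h', hpeval (k - j) (by omega), mul_zero]
      rw [Finset.sum_congr rfl hterm, Finset.sum_ite_eq' (Finset.range (n + 1))]
      rw [if_pos hj]
    rw [← h2, h1]
  have heval : (p n).eval (x + y) = f.eval x := by
    rw [hfdef, eval_comp, eval_add, eval_X, eval_C]
  rw [heval, hc, eval_finset_sum]
  refine Finset.sum_congr rfl fun k hk => ?_
  rw [eval_mul, eval_C, hcj k hk, mul_comm]
end

section
/- (First Expansion Theorem.) Let Q : ℝ[X] → ℝ[X] be a shift-invariant ℝ-linear operator with basic sequence p : ℕ → ℝ[X] (deg(p n) = n, p 0 = 1, (p n).eval(0) = 0 for n ≥ 1, Q(p 0) = 0, Q(p (n+1)) = p n). Then every shift-invariant ℝ-linear operator S : ℝ[X] → ℝ[X] admits the expansion: for every polynomial f ∈ ℝ[X], S f = ∑_{k=0}^{deg f} a_k • (Q^k f), where a_k = (S (p k)).eval(0) and Q^k denotes the k-fold composite of Q. -/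
/-!
The basic sequence `p` is a basis of `K[X]`, and since `((Q ^ k) (p n)).eval 0` is the
Kronecker delta, the coordinates of a polynomial `g` of degree `≤ N` in this basis are
`((Q ^ k) g).eval 0`. Applied to `g = f(X + a)`, shift invariance of `Q ^ k` turns this into
the Taylor formula `f(X + a) = ∑ₖ ((Q ^ k) f)(a) • p k`. Applying `S`, evaluating at `0` and
using shift invariance of `S` gives `(S f)(a) = ∑ₖ (S (p k))(0) • ((Q ^ k) f)(a)` for every `a`,
which determines `S f` because `K` is infinite.
-/

open Polynomial Finset

variable {K : Type*} [Field K]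

def IsShiftInvariant (T : Module.End K K[X]) : Prop :=
  ∀ (a : K) (f : K[X]), T (f.comp (X + C a)) = (T f).comp (X + C a)

structure IsBasicSequence (Q : Module.End K K[X]) (p : ℕ → K[X]) : Prop where
  degree_eq : ∀ n : ℕ, (p n).degree = n
  zero_eq_one : p 0 = 1
  eval_zero_eq_zero : ∀ n : ℕ, 1 ≤ n → (p n).eval 0 = 0
  apply_zero : Q (p 0) = 0
  apply_succ : ∀ n : ℕ, Q (p (n + 1)) = p n

theorem IsShiftInvariant.pow {Q : Module.End K K[X]} (hQ : IsShiftInvariant Q) (k : ℕ) :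
    IsShiftInvariant (Q ^ k) := by
  induction k with
  | zero => intro a f; simp
  | succ k ih =>
    intro a f
    rw [pow_succ, Module.End.mul_apply, Module.End.mul_apply, hQ, ih]

namespace IsBasicSequence

variable {Q : Module.End K K[X]} {p : ℕ → K[X]}

theorem pow_apply (hp : IsBasicSequence Q p) (k n : ℕ) :
    (Q ^ k) (p n) = if k ≤ n then p (n - k) else 0 := by
  induction k generalizing n with
  | zero => simp
  | succ k ih =>
    rw [pow_succ, Module.End.mul_apply]
    cases n with
    | zero => simp [hp.apply_zero]
    | succ n => simp [hp.apply_succ, ih]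

theorem eval_zero_pow_apply (hp : IsBasicSequence Q p) (k n : ℕ) :
    ((Q ^ k) (p n)).eval 0 = if k = n then 1 else 0 := by
  rw [hp.pow_apply]
  rcases lt_trichotomy k n with hkn | rfl | hnk
  · simp [hkn.le, hkn.ne, hp.eval_zero_eq_zero (n - k) (by omega)]
  · simp [hp.zero_eq_one]
  · simp [hnk.not_ge, hnk.ne']

theorem span_image_Iic (hp : IsBasicSequence Q p) (N : ℕ) :
    Submodule.span K (p '' Set.Iic N) = degreeLE K N :=
  Sequence.span_degreeLE ⟨p, hp.degree_eq⟩ fun n _ ↦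
    (leadingCoeff_ne_zero.mpr (ne_zero_of_degree_gt (n := ⊥) (by simp [hp.degree_eq]))).isUnit

theorem sum_eval_zero_pow_apply_smul (hp : IsBasicSequence Q p) {N : ℕ} {g : K[X]}
    (hg : g ∈ degreeLE K N) :
    ∑ k ∈ range (N + 1), ((Q ^ k) g).eval 0 • p k = g := by
  rw [← hp.span_image_Iic] at hg
  induction hg using Submodule.span_induction with
  | mem g hg =>
    obtain ⟨n, hn, rfl⟩ := hg
    simp [hp.eval_zero_pow_apply, Nat.lt_succ_of_le hn]
  | zero => simp
  | add g h _ _ hg hh => simp [add_smul, sum_add_distrib, hg, hh]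
  | smul c g _ hg => simp [mul_smul, ← smul_sum, hg]

theorem comp_X_add_C_eq_sum (hQ : IsShiftInvariant Q) (hp : IsBasicSequence Q p)
    (f : K[X]) (a : K) :
    f.comp (X + C a) = ∑ k ∈ range (f.natDegree + 1), ((Q ^ k) f).eval a • p k := by
  have hdeg : f.comp (X + C a) ∈ degreeLE K f.natDegree := by
    rw [mem_degreeLE]
    exact degree_le_of_natDegree_le (by simp [natDegree_comp])
  conv_lhs => rw [← hp.sum_eval_zero_pow_apply_smul hdeg]
  simp [hQ.pow _ a, eval_comp]

end IsBasicSequence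

theorem IsShiftInvariant.apply_eq_sum_smul_pow_apply [Infinite K] {Q S : Module.End K K[X]}
    {p : ℕ → K[X]} (hQ : IsShiftInvariant Q) (hp : IsBasicSequence Q p)
    (hS : IsShiftInvariant S) (f : K[X]) :
    S f = ∑ k ∈ range (f.natDegree + 1), (S (p k)).eval 0 • (Q ^ k) f := by
  refine Polynomial.funext fun a ↦ ?_
  have hSa := congrArg (eval 0) (hS a f)
  rw [hp.comp_X_add_C_eq_sum hQ f a, eval_comp] at hSa
  simpa [eval_finsetSum, mul_comm] using hSa.symm

/-- First Expansion Theorem: every shift-invariant linear operator `S` on `ℝ[X]` expands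
as `S f = ∑_{k=0}^{deg f} a_k • (Q^k f)` with `a_k = (S (p k)).eval 0`, where `Q` is a
shift-invariant delta operator with basic sequence `p`. -/
theorem first_expansion_theorem
    (Q : Module.End ℝ ℝ[X])
    (hQshift : ∀ (a : ℝ) (f : ℝ[X]),
      Q (f.comp (X + C a)) = (Q f).comp (X + C a))
    (p : ℕ → ℝ[X])
    (hdeg : ∀ n : ℕ, (p n).degree = n)
    (hp0 : p 0 = 1)
    (hpeval : ∀ n : ℕ, 1 ≤ n → (p n).eval 0 = 0)
    (hQ0 : Q (p 0) = 0)
    (hQs : ∀ n : ℕ, Q (p (n + 1)) = p n)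
    (S : Module.End ℝ ℝ[X])
    (hSshift : ∀ (a : ℝ) (f : ℝ[X]),
      S (f.comp (X + C a)) = (S f).comp (X + C a)) :
    ∀ f : ℝ[X],
      S f = ∑ k ∈ Finset.range (f.natDegree + 1),
        ((S (p k)).eval 0) • ((Q ^ k) f) :=
  IsShiftInvariant.apply_eq_sum_smul_pow_apply hQshift ⟨hdeg, hp0, hpeval, hQ0, hQs⟩ hSshift
end

section
/- (Isomorphism Theorem.) Let Q : ℝ[X] → ℝ[X] be a shift-invariant ℝ-linear operator with basic sequence p : ℕ → ℝ[X] (deg(p n) = n, p 0 = 1, (p n).eval(0) = 0 for n ≥ 1, Q(p 0) = 0, Q(p (n+1)) = p n). Then the map Φ sending a shift-invariant ℝ-linear operator S to the formal power series Φ(S) = ∑_{k≥0} ((S (p k)).eval(0))·tᵏ ∈ PowerSeries ℝ is a bijection from the set of shift-invariant ℝ-linear endomorphisms of ℝ[X] onto PowerSeries ℝ, and it is an algebra isomorphism: Φ(S + T) = Φ(S) + Φ(T), Φ(c • S) = c·Φ(S), Φ(S ∘ T) = Φ(S)·Φ(T), and Φ(id) = 1. -/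
open Polynomial

/-- A linear operator on `ℝ[X]` is shift invariant if it commutes with all shifts
`f(x) ↦ f(x + a)`. -/
def ShiftInvariant (S : Module.End ℝ ℝ[X]) : Prop :=
  ∀ (a : ℝ) (f : ℝ[X]), S (f.comp (X + C a)) = (S f).comp (X + C a)

/-!
Since `Q` maps `p (n + 1)` to `p n` and `p` is a basis adapted to the degree, `Qᵏ` kills the
polynomials of degree `< k`. Hence every power series `F` gives an operator `F(Q) = ∑ₖ Fₖ Qᵏ`,
shift invariant when `Q` is, and `F(Q) (p n)` takes the value `Fₙ` at `0`. A shift-invariant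
operator is determined by the values at `0` of its images of the basis `p`, since the shifts move
every point to `0`. So `S = Φ(S)(Q)` (the expansion theorem) and `Φ` is bijective; expanding
`T (p n)` this way gives `Φ(S ∘ T) = Φ(S) Φ(T)`.
-/

section CommRing

variable {R : Type*} [CommRing R] {Q : Module.End R R[X]} {p : ℕ → R[X]}

theorem pow_apply_add_of_map_succ (hQs : ∀ n : ℕ, Q (p (n + 1)) = p n) (k n : ℕ) :
    (Q ^ k) (p (n + k)) = p n := by
  induction k generalizing n with
  | zero => rfl
  | succ k ih => rw [pow_succ, Module.End.mul_apply, ← add_assoc, hQs, ih]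

theorem pow_apply_of_le_of_map_succ (hQs : ∀ n : ℕ, Q (p (n + 1)) = p n) {k n : ℕ}
    (hkn : k ≤ n) : (Q ^ k) (p n) = p (n - k) := by
  conv_lhs => rw [← Nat.sub_add_cancel hkn]
  exact pow_apply_add_of_map_succ hQs k (n - k)

theorem pow_apply_of_lt_of_map_succ (hQ0 : Q (p 0) = 0)
    (hQs : ∀ n : ℕ, Q (p (n + 1)) = p n) {k n : ℕ} (hnk : n < k) : (Q ^ k) (p n) = 0 := by
  obtain ⟨j, rfl⟩ := Nat.exists_eq_add_of_lt hnk
  rw [show n + j + 1 = j + 1 + n by omega, pow_add, Module.End.mul_apply,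
    pow_apply_of_le_of_map_succ hQs le_rfl, Nat.sub_self, pow_succ, Module.End.mul_apply, hQ0,
    map_zero]

end CommRing

section Field

variable {K : Type*} [Field K] {p : ℕ → K[X]}

theorem isUnit_leadingCoeff_of_degree_eq {f : K[X]} {n : ℕ} (h : f.degree = n) :
    IsUnit f.leadingCoeff :=
  (leadingCoeff_ne_zero.2 (ne_zero_of_coe_le_degree h.ge)).isUnit

theorem span_image_Iio_eq_degreeLT (hdeg : ∀ n : ℕ, (p n).degree = n) (m : ℕ) :
    Submodule.span K (p '' Set.Iio m) = degreeLT K m :=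
  Sequence.span_degreeLT ⟨p, hdeg⟩ fun i _ ↦ isUnit_leadingCoeff_of_degree_eq (hdeg i)

theorem span_range_eq_top_of_degree_eq (hdeg : ∀ n : ℕ, (p n).degree = n) :
    Submodule.span K (Set.range p) = ⊤ :=
  Sequence.span ⟨p, hdeg⟩ fun i ↦ isUnit_leadingCoeff_of_degree_eq (hdeg i)

theorem pow_apply_eq_zero_of_natDegree_lt {Q : Module.End K K[X]}
    (hdeg : ∀ n : ℕ, (p n).degree = n) (hQ0 : Q (p 0) = 0)
    (hQs : ∀ n : ℕ, Q (p (n + 1)) = p n) (k : ℕ) (f : K[X]) (hf : f.natDegree < k) :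
    (Q ^ k) f = 0 := by
  have hspan : Submodule.span K (p '' Set.Iio k) ≤ LinearMap.ker (Q ^ k) :=
    Submodule.span_le.2 <| Set.image_subset_iff.2 fun _ hn ↦
      pow_apply_of_lt_of_map_succ hQ0 hQs hn
  refine hspan ?_
  rw [span_image_Iio_eq_degreeLT hdeg, mem_degreeLT]
  exact degree_le_natDegree.trans_lt (by exact_mod_cast hf)

end Field

section PowerSeriesOp

variable {R : Type*} [CommRing R] {Q : Module.End R R[X]} {p : ℕ → R[X]}

theorem sum_range_smul_pow_apply_eq_of_natDegree_lt
    (hQ : ∀ (k : ℕ) (f : R[X]), f.natDegree < k → (Q ^ k) f = 0) (c : ℕ → R) {f : R[X]} {N : ℕ}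
    (hN : f.natDegree < N) :
    ∑ k ∈ Finset.range (f.natDegree + 1), c k • (Q ^ k) f =
      ∑ k ∈ Finset.range N, c k • (Q ^ k) f :=
  Finset.sum_subset (Finset.range_subset_range.2 hN) fun k _ hk ↦ by
    rw [hQ k f (by simpa using hk), smul_zero]

/-- The operator `F(Q) = ∑ₖ Fₖ Qᵏ`, a finite sum on each polynomial by `hQ`. -/
noncomputable def powerSeriesOp (Q : Module.End R R[X])
    (hQ : ∀ (k : ℕ) (f : R[X]), f.natDegree < k → (Q ^ k) f = 0) (F : PowerSeries R) :
    Module.End R R[X] where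
  toFun f := ∑ k ∈ Finset.range (f.natDegree + 1), PowerSeries.coeff k F • (Q ^ k) f
  map_add' f g := by
    have hN {h : R[X]} (hh : h.natDegree ≤ max f.natDegree g.natDegree) :=
      sum_range_smul_pow_apply_eq_of_natDegree_lt hQ (PowerSeries.coeff · F) (Nat.lt_succ_of_le hh)
    rw [hN (natDegree_add_le f g), hN (le_max_left _ _), hN (le_max_right _ _),
      ← Finset.sum_add_distrib]
    simp only [map_add, smul_add]
  map_smul' r f := by
    rw [sum_range_smul_pow_apply_eq_of_natDegree_lt hQ _
      (Nat.lt_succ_of_le (natDegree_smul_le r f)), Finset.smul_sum]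
    simp only [map_smul, smul_comm r, RingHom.id_apply]

theorem powerSeriesOp_apply_of_natDegree_lt
    (hQ : ∀ (k : ℕ) (f : R[X]), f.natDegree < k → (Q ^ k) f = 0) (F : PowerSeries R)
    {f : R[X]} {N : ℕ} (hN : f.natDegree < N) :
    powerSeriesOp Q hQ F f = ∑ k ∈ Finset.range N, PowerSeries.coeff k F • (Q ^ k) f :=
  sum_range_smul_pow_apply_eq_of_natDegree_lt hQ _ hN

theorem powerSeriesOp_apply_basis (hdeg : ∀ n : ℕ, (p n).degree = n)
    (hQs : ∀ n : ℕ, Q (p (n + 1)) = p n)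
    (hQ : ∀ (k : ℕ) (f : R[X]), f.natDegree < k → (Q ^ k) f = 0) (F : PowerSeries R) (n : ℕ) :
    powerSeriesOp Q hQ F (p n) =
      ∑ k ∈ Finset.range (n + 1), PowerSeries.coeff k F • p (n - k) := by
  rw [powerSeriesOp_apply_of_natDegree_lt hQ F
    (Nat.lt_succ_of_le (natDegree_le_of_degree_le (hdeg n).le))]
  exact Finset.sum_congr rfl fun k hk ↦ by
    rw [pow_apply_of_le_of_map_succ hQs (Finset.mem_range_succ_iff.1 hk)]

theorem eval_zero_powerSeriesOp_apply_basis (hdeg : ∀ n : ℕ, (p n).degree = n) (hp0 : p 0 = 1)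
    (hpeval : ∀ n : ℕ, 1 ≤ n → (p n).eval 0 = 0) (hQs : ∀ n : ℕ, Q (p (n + 1)) = p n)
    (hQ : ∀ (k : ℕ) (f : R[X]), f.natDegree < k → (Q ^ k) f = 0) (F : PowerSeries R) (n : ℕ) :
    (powerSeriesOp Q hQ F (p n)).eval 0 = PowerSeries.coeff n F := by
  rw [powerSeriesOp_apply_basis hdeg hQs hQ, eval_finsetSum,
    Finset.sum_eq_single_of_mem n (Finset.self_mem_range_succ n)]
  · simp [hp0]
  · intro k hk hkn
    rw [eval_smul, hpeval _ (by grind), smul_zero]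

noncomputable def operatorSeries (p : ℕ → R[X]) : Module.End R R[X] →ₗ[R] PowerSeries R where
  toFun S := PowerSeries.mk fun k ↦ (S (p k)).eval 0
  map_add' S T := by ext; simp
  map_smul' c S := by ext; simp

@[simp]
theorem coeff_operatorSeries (S : Module.End R R[X]) (k : ℕ) :
    PowerSeries.coeff k (operatorSeries p S) = (S (p k)).eval 0 := by
  simp [operatorSeries]

theorem operatorSeries_powerSeriesOp (hdeg : ∀ n : ℕ, (p n).degree = n) (hp0 : p 0 = 1)
    (hpeval : ∀ n : ℕ, 1 ≤ n → (p n).eval 0 = 0) (hQs : ∀ n : ℕ, Q (p (n + 1)) = p n)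
    (hQ : ∀ (k : ℕ) (f : R[X]), f.natDegree < k → (Q ^ k) f = 0) (F : PowerSeries R) :
    operatorSeries p (powerSeriesOp Q hQ F) = F := by
  ext n
  rw [coeff_operatorSeries, eval_zero_powerSeriesOp_apply_basis hdeg hp0 hpeval hQs]

theorem operatorSeries_id (hp0 : p 0 = 1) (hpeval : ∀ n : ℕ, 1 ≤ n → (p n).eval 0 = 0) :
    operatorSeries p LinearMap.id = 1 := by
  ext (_ | k)
  · simp [hp0]
  · simp [hpeval (k + 1) k.succ_pos]

end PowerSeriesOp

namespace ShiftInvariant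

variable {S T Q : Module.End ℝ ℝ[X]} {p : ℕ → ℝ[X]}

theorem pow (hS : ShiftInvariant S) (k : ℕ) : ShiftInvariant (S ^ k) := by
  induction k with
  | zero => intro a f; rfl
  | succ k ih => intro a f; rw [pow_succ, Module.End.mul_apply, Module.End.mul_apply, hS, ih]

theorem _root_.shiftInvariant_powerSeriesOp (hQshift : ShiftInvariant Q)
    (hQ : ∀ (k : ℕ) (f : ℝ[X]), f.natDegree < k → (Q ^ k) f = 0) (F : PowerSeries ℝ) :
    ShiftInvariant (powerSeriesOp Q hQ F) := by
  intro a f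
  have hN : (f.comp (X + C a)).natDegree < f.natDegree + 1 := by
    rw [natDegree_comp, natDegree_X_add_C, mul_one]
    exact f.natDegree.lt_succ_self
  rw [powerSeriesOp_apply_of_natDegree_lt hQ F hN,
    powerSeriesOp_apply_of_natDegree_lt hQ F f.natDegree.lt_succ_self]
  simp only [sum_comp, smul_comp, hQshift.pow _ a f]

theorem eval_apply (hS : ShiftInvariant S) (f : ℝ[X]) (a : ℝ) :
    (S f).eval a = (S (taylor a f)).eval 0 := by
  rw [taylor_apply, hS, eval_comp]
  simp

theorem eq_of_operatorSeries_eq (hdeg : ∀ n : ℕ, (p n).degree = n) (hS : ShiftInvariant S)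
    (hT : ShiftInvariant T) (h : operatorSeries p S = operatorSeries p T) : S = T := by
  have h0 : leval 0 ∘ₗ S = leval 0 ∘ₗ T :=
    LinearMap.ext_on_range (span_range_eq_top_of_degree_eq hdeg) fun k ↦ by
      simpa using congrArg (PowerSeries.coeff k) h
  refine LinearMap.ext fun f ↦ Polynomial.funext fun a ↦ ?_
  rw [hS.eval_apply, hT.eval_apply]
  exact LinearMap.congr_fun h0 _

theorem eq_powerSeriesOp_operatorSeries (hS : ShiftInvariant S) (hQshift : ShiftInvariant Q)
    (hdeg : ∀ n : ℕ, (p n).degree = n) (hp0 : p 0 = 1)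
    (hpeval : ∀ n : ℕ, 1 ≤ n → (p n).eval 0 = 0) (hQs : ∀ n : ℕ, Q (p (n + 1)) = p n)
    (hQ : ∀ (k : ℕ) (f : ℝ[X]), f.natDegree < k → (Q ^ k) f = 0) :
    S = powerSeriesOp Q hQ (operatorSeries p S) :=
  hS.eq_of_operatorSeries_eq hdeg (shiftInvariant_powerSeriesOp hQshift hQ _)
    (operatorSeries_powerSeriesOp hdeg hp0 hpeval hQs hQ _).symm

theorem apply_basis (hS : ShiftInvariant S) (hQshift : ShiftInvariant Q)
    (hdeg : ∀ n : ℕ, (p n).degree = n) (hp0 : p 0 = 1)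
    (hpeval : ∀ n : ℕ, 1 ≤ n → (p n).eval 0 = 0) (hQ0 : Q (p 0) = 0)
    (hQs : ∀ n : ℕ, Q (p (n + 1)) = p n) (n : ℕ) :
    S (p n) = ∑ k ∈ Finset.range (n + 1), (S (p k)).eval 0 • p (n - k) := by
  have hQ := pow_apply_eq_zero_of_natDegree_lt hdeg hQ0 hQs
  conv_lhs => rw [hS.eq_powerSeriesOp_operatorSeries hQshift hdeg hp0 hpeval hQs hQ]
  simp only [powerSeriesOp_apply_basis hdeg hQs hQ, coeff_operatorSeries]

end ShiftInvariant

theorem operatorSeries_comp {Q : Module.End ℝ ℝ[X]} {p : ℕ → ℝ[X]} (hQshift : ShiftInvariant Q)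
    (hdeg : ∀ n : ℕ, (p n).degree = n) (hp0 : p 0 = 1)
    (hpeval : ∀ n : ℕ, 1 ≤ n → (p n).eval 0 = 0) (hQ0 : Q (p 0) = 0)
    (hQs : ∀ n : ℕ, Q (p (n + 1)) = p n) (S : Module.End ℝ ℝ[X]) {T : Module.End ℝ ℝ[X]}
    (hT : ShiftInvariant T) :
    operatorSeries p (S ∘ₗ T) = operatorSeries p S * operatorSeries p T := by
  ext n
  rw [coeff_operatorSeries, LinearMap.comp_apply,
    hT.apply_basis hQshift hdeg hp0 hpeval hQ0 hQs, map_sum, eval_finsetSum, mul_comm,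
    PowerSeries.coeff_mul, Finset.Nat.sum_antidiagonal_eq_sum_range_succ_mk]
  simp only [map_smul, eval_smul, coeff_operatorSeries, smul_eq_mul]

/-- Isomorphism Theorem: given a shift-invariant delta operator `Q` with basic sequence `p`,
the map `Φ(S) = ∑_k ((S (p k)).eval 0) tᵏ` is a bijection from the shift-invariant linear
operators on `ℝ[X]` onto the algebra of formal power series, and it is an algebra
isomorphism: it is additive, homogeneous, multiplicative (sending composition to the
product of power series), and sends the identity operator to `1`. -/
theorem isomorphism_theorem
    (Q : Module.End ℝ ℝ[X])
    (hQshift : ShiftInvariant Q)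
    (p : ℕ → ℝ[X])
    (hdeg : ∀ n : ℕ, (p n).degree = n)
    (hp0 : p 0 = 1)
    (hpeval : ∀ n : ℕ, 1 ≤ n → (p n).eval 0 = 0)
    (hQ0 : Q (p 0) = 0)
    (hQs : ∀ n : ℕ, Q (p (n + 1)) = p n)
    (Φ : Module.End ℝ ℝ[X] → PowerSeries ℝ)
    (hΦ : ∀ S : Module.End ℝ ℝ[X],
      Φ S = PowerSeries.mk fun k => (S (p k)).eval 0) :
    (∀ S T : Module.End ℝ ℝ[X],
        ShiftInvariant S → ShiftInvariant T → Φ S = Φ T → S = T) ∧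
    (∀ F : PowerSeries ℝ, ∃ S : Module.End ℝ ℝ[X], ShiftInvariant S ∧ Φ S = F) ∧
    (∀ S T : Module.End ℝ ℝ[X],
        ShiftInvariant S → ShiftInvariant T → Φ (S + T) = Φ S + Φ T) ∧
    (∀ (c : ℝ) (S : Module.End ℝ ℝ[X]),
        ShiftInvariant S → Φ (c • S) = (PowerSeries.C (R := ℝ) c) * Φ S) ∧
    (∀ S T : Module.End ℝ ℝ[X],
        ShiftInvariant S → ShiftInvariant T → Φ (S ∘ₗ T) = Φ S * Φ T) ∧
    Φ (LinearMap.id : Module.End ℝ ℝ[X]) = 1 := by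
  obtain rfl : Φ = operatorSeries p := funext hΦ
  have hQ := pow_apply_eq_zero_of_natDegree_lt hdeg hQ0 hQs
  refine ⟨fun S T hS hT ↦ hS.eq_of_operatorSeries_eq hdeg hT, fun F ↦ ?_,
    fun S T _ _ ↦ map_add _ S T, fun c S _ ↦ by rw [map_smul, PowerSeries.smul_eq_C_mul],
    fun S T _ hT ↦ operatorSeries_comp hQshift hdeg hp0 hpeval hQ0 hQs S hT,
    operatorSeries_id hp0 hpeval⟩
  exact ⟨powerSeriesOp Q hQ F, shiftInvariant_powerSeriesOp hQshift hQ F,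
    operatorSeries_powerSeriesOp hdeg hp0 hpeval hQs hQ F⟩
end

section
/- Define F : ℝ → ℝ by F(x) = (1/√5) · exp(((1 − √5)/2)·x) · (1 + (exp(√5·x) − 1)·χ(−x)), where χ is the Heaviside function (χ(s) = 1 for s ≥ 0 and χ(s) = 0 for s < 0). Then for every n ∈ ℕ the function x ↦ F(x)·xⁿ/n! is Lebesgue-integrable on ℝ and ∫_ℝ F(x)·(xⁿ/n!) dx = fib(n+1), where fib is the Fibonacci sequence (fib 0 = 0, fib 1 = 1, fib(n+2) = fib(n+1) + fib(n)), so that fib(n+1) runs through 1, 1, 2, 3, 5, …. -/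
open MeasureTheory Real Set

/-!
On each half-line the kernel is a single exponential: `F x = e^{φx}/√5` for `x ≤ 0` and
`F x = e^{ψx}/√5` for `x > 0`, where `φ, ψ` are the golden ratio and its conjugate. The Gamma
integral gives `∫_{x>0} e^{cx} xⁿ/n! = (-c)⁻¹^(n+1)` for `c < 0`, and reflecting `x ↦ -x`,
`∫_{x≤0} e^{cx} xⁿ/n! = -(-c)⁻¹^(n+1)` for `c > 0`. As `(-ψ)⁻¹ = φ` and `(-φ)⁻¹ = ψ`, the
`n`-th moment is `(φ^(n+1) - ψ^(n+1))/√5`, which is `fib (n+1)` by Binet's formula.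
-/

lemma integrableOn_exp_mul_mul_pow_Ioi {c : ℝ} (hc : c < 0) (n : ℕ) :
    IntegrableOn (fun x => exp (c * x) * x ^ n) (Ioi 0) := by
  refine (integrableOn_rpow_mul_exp_neg_mul_rpow (s := n)
    (neg_one_lt_zero.trans_le n.cast_nonneg) one_pos (neg_pos.2 hc)).congr_fun
    (fun x _ => ?_) measurableSet_Ioi
  simp only [rpow_one, rpow_natCast, neg_neg, mul_comm]

lemma integral_exp_mul_mul_pow_Ioi {c : ℝ} (hc : c < 0) (n : ℕ) :
    ∫ x in Ioi 0, exp (c * x) * x ^ n = n.factorial * (-c)⁻¹ ^ (n + 1) := by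
  have h := integral_rpow_mul_exp_neg_mul_Ioi (a := n + 1) (by positivity) (neg_pos.2 hc)
  rw [add_sub_cancel_right, Gamma_nat_eq_factorial, ← Nat.cast_succ, rpow_natCast] at h
  rw [← one_div, mul_comm, ← h]
  refine setIntegral_congr_fun measurableSet_Ioi (fun x _ => ?_)
  rw [rpow_natCast, neg_mul, neg_neg, mul_comm]

lemma integrableOn_exp_mul_mul_pow_Iic {c : ℝ} (hc : 0 < c) (n : ℕ) :
    IntegrableOn (fun x => exp (c * x) * x ^ n) (Iic 0) := by
  have h : IntegrableOn (fun x => exp (-c * x) * (-x) ^ n) (Ici (-0)) := by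
    rw [neg_zero, integrableOn_Ici_iff_integrableOn_Ioi]
    refine IntegrableOn.congr_fun
      ((integrableOn_exp_mul_mul_pow_Ioi (neg_neg_of_pos hc) n).const_mul ((-1) ^ n))
      (fun x _ => ?_) measurableSet_Ioi
    simp only [neg_pow x]
    ring
  simpa using h.comp_neg_Iic

lemma integral_exp_mul_mul_pow_Iic {c : ℝ} (hc : 0 < c) (n : ℕ) :
    ∫ x in Iic 0, exp (c * x) * x ^ n = -(n.factorial * (-c)⁻¹ ^ (n + 1)) := by
  calc ∫ x in Iic 0, exp (c * x) * x ^ n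
      = ∫ x in Ioi 0, (-1) ^ n * (exp (-c * x) * x ^ n) := by
        rw [← neg_zero, ← integral_comp_neg_Ioi, neg_zero]
        refine setIntegral_congr_fun measurableSet_Ioi (fun x _ => ?_)
        simp only [neg_pow x, mul_neg, neg_mul]
        ring
    _ = -(n.factorial * (-c)⁻¹ ^ (n + 1)) := by
        rw [integral_const_mul, integral_exp_mul_mul_pow_Ioi (neg_neg_of_pos hc), neg_neg,
          inv_neg, neg_pow c⁻¹, pow_succ (-1 : ℝ)]
        ring

noncomputable def twoSidedExp (a b x : ℝ) : ℝ := if x ≤ 0 then exp (a * x) else exp (b * x)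

section TwoSidedExp

variable {a b : ℝ}

lemma integrable_twoSidedExp_mul_pow (ha : 0 < a) (hb : b < 0) (n : ℕ) :
    Integrable (fun x => twoSidedExp a b x * x ^ n) := by
  rw [← integrableOn_univ, ← Iic_union_Ioi (a := 0)]
  refine IntegrableOn.union ?_ ?_
  · refine (integrableOn_exp_mul_mul_pow_Iic ha n).congr_fun (fun x hx => ?_) measurableSet_Iic
    rw [twoSidedExp, if_pos (mem_Iic.1 hx)]
  · refine (integrableOn_exp_mul_mul_pow_Ioi hb n).congr_fun (fun x hx => ?_) measurableSet_Ioi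
    rw [twoSidedExp, if_neg (not_le.2 (mem_Ioi.1 hx))]

lemma integral_twoSidedExp_mul_pow (ha : 0 < a) (hb : b < 0) (n : ℕ) :
    ∫ x, twoSidedExp a b x * x ^ n = n.factorial * ((-b)⁻¹ ^ (n + 1) - (-a)⁻¹ ^ (n + 1)) := by
  have hInt := integrable_twoSidedExp_mul_pow ha hb n
  rw [← intervalIntegral.integral_Iic_add_Ioi hInt.integrableOn hInt.integrableOn,
    setIntegral_congr_fun measurableSet_Iic (g := fun x => exp (a * x) * x ^ n)
      (fun x hx => by rw [twoSidedExp, if_pos (mem_Iic.1 hx)]),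
    setIntegral_congr_fun measurableSet_Ioi (g := fun x => exp (b * x) * x ^ n)
      (fun x hx => by rw [twoSidedExp, if_neg (not_le.2 (mem_Ioi.1 hx))]),
    integral_exp_mul_mul_pow_Iic ha, integral_exp_mul_mul_pow_Ioi hb]
  ring

end TwoSidedExp

/-- The kernel `F(x) = (1/√5)·e^{((1-√5)/2)x}·(1 + (e^{√5 x} − 1)·χ(−x))` (with `χ` the
Heaviside function) is an umbral functional for the Fibonacci numbers: for every `n`,
`x ↦ F(x)·xⁿ/n!` is Lebesgue integrable and `∫_ℝ F(x)·(xⁿ/n!) dx = fib (n+1)`. -/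
theorem fibonacci_umbral_functional
    (χ : ℝ → ℝ) (hχ : ∀ s : ℝ, χ s = if 0 ≤ s then 1 else 0)
    (F : ℝ → ℝ)
    (hF : ∀ x : ℝ, F x =
      (1 / Real.sqrt 5) * Real.exp (((1 - Real.sqrt 5) / 2) * x) *
        (1 + (Real.exp (Real.sqrt 5 * x) - 1) * χ (-x))) :
    ∀ n : ℕ,
      Integrable (fun x : ℝ => F x * (x ^ n / (n.factorial : ℝ))) ∧
      ∫ x : ℝ, F x * (x ^ n / (n.factorial : ℝ)) = (Nat.fib (n + 1) : ℝ) := by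
  intro n
  have hF_eq : ∀ x, F x = (√5)⁻¹ * twoSidedExp goldenRatio goldenConj x := by
    intro x
    rw [hF, hχ, twoSidedExp, one_div]
    by_cases hx : x ≤ 0
    · rw [if_pos (neg_nonneg.2 hx), if_pos hx, mul_one, add_sub_cancel, mul_assoc, ← exp_add,
        ← goldenRatio_sub_goldenConj]
      ring_nf
    · rw [if_neg (by simpa using hx), if_neg hx, mul_zero, add_zero, mul_one]
  have hkernel : ∀ x : ℝ, F x * (x ^ n / (n.factorial : ℝ)) =
      ((√5)⁻¹ / n.factorial) * (twoSidedExp goldenRatio goldenConj x * x ^ n) := fun x => by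
    rw [hF_eq]
    ring
  simp_rw [hkernel]
  refine ⟨(integrable_twoSidedExp_mul_pow goldenRatio_pos goldenConj_neg n).const_mul _, ?_⟩
  rw [integral_const_mul, integral_twoSidedExp_mul_pow goldenRatio_pos goldenConj_neg,
    inv_neg, inv_neg, inv_goldenRatio, inv_goldenConj, neg_neg, neg_neg, coe_fib_eq]
  field_simp
end
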